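/- arXiv:2007.13500 — 2 statements merged into one kernel-verified Lean document; each statement's English description precedes it below -/
import Mathlib

section
/- In the forcing G_B, for any vertex a ∈ B of a suitable 2-graph B, the projection map pr_a : G_B → Cohen forcing 2^{<ω}, sending p to the sequence ⟨p(a,k) : k < n_p⟩ (or the empty sequence if a ∉ F_p), is a forcing projection: it is monotone, surjective, and any extension in 2^{<ω} of pr_a(p) is realized by some extension of p. -/
open Set

universe u

variable {Ω : Type u}

/-- `η` respects the 2-graph given by `R` on the set `D`. -/
def RespectsOn (R : Fin 2 → Ω → Ω → Prop) (D : Set Ω) (η : Ω → Fin 2) : Prop :=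
  ∀ e : Fin 2, ∀ a ∈ D, ∀ b ∈ D, R e a b → ¬(η a = e ∧ η b = e)

/-- A condition of the forcing `G_B`. -/
structure GBCond (Ω : Type u) where
  F : Finset Ω
  n : ℕ
  v : Ω → ℕ → Fin 2
  empty_iff : F = ∅ ↔ n = 0

/-- The order of `G_B`. -/
def GBle (R : Fin 2 → Ω → Ω → Prop) (q p : GBCond Ω) : Prop :=
  p.F ⊆ q.F ∧ p.n ≤ q.n ∧
    (∀ a ∈ p.F, ∀ k < p.n, q.v a k = p.v a k) ∧
    ∀ k, p.n ≤ k → k < q.n → ∀ e : Fin 2, ∀ a ∈ p.F, ∀ b ∈ p.F,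
      R e a b → ¬(q.v a k = e ∧ q.v b k = e)

/-- The projection `pr_a : G_B → 2^{<ω}`, sending `p` to `⟨p(a,k) : k < n_p⟩`
(the empty sequence if `a ∉ F_p`). -/
def proj [DecidableEq Ω] (a : Ω) (p : GBCond Ω) : List (Fin 2) :=
  if a ∈ p.F then List.ofFn (fun k : Fin p.n => p.v a k) else []

/-!
To realise an end-extension `s` of `pr_a(p)`, add `a` to `F_p` and colour each new level `k`
by a total respecting colouring `η_k` with `η_k(a) = s_k`; restricted to `F_p` these respect
`B`, so the result extends `p`. Starting from the empty condition the same construction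
projects exactly onto `s`, which gives surjectivity.
-/

theorem RespectsOn.mono {R : Fin 2 → Ω → Ω → Prop} {D E : Set Ω} {η : Ω → Fin 2}
    (h : RespectsOn R D η) (hED : E ⊆ D) : RespectsOn R E η :=
  fun e a ha b hb => h e a (hED ha) b (hED hb)

def GBCond.empty : GBCond Ω := ⟨∅, 0, fun _ _ => 0, by simp⟩

section

variable [DecidableEq Ω]

namespace GBCond

/-- `max m 1` rather than `m`: the new `F` is nonempty, so `n` has to be positive. -/
def extend (p : GBCond Ω) (a : Ω) (m : ℕ) (η : ℕ → Ω → Fin 2) : GBCond Ω where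
  F := insert a p.F
  n := max p.n (max m 1)
  v x k := if x ∈ p.F ∧ k < p.n then p.v x k else η k x
  empty_iff := ⟨fun h => absurd h (Finset.insert_ne_empty a p.F), fun h => by omega⟩

theorem extend_le {R : Fin 2 → Ω → Ω → Prop} (p : GBCond Ω) (a : Ω) (m : ℕ)
    {η : ℕ → Ω → Fin 2} (hη : ∀ k, RespectsOn R p.F (η k)) :
    GBle R (p.extend a m η) p := by
  refine ⟨Finset.subset_insert a p.F, le_max_left _ _, fun x hx k hk => ?_,
    fun k hk _ e x hx y hy hR => ?_⟩
  · simp [extend, hx, hk]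
  · simpa [extend, hk.not_gt] using hη k e x hx y hy hR

end GBCond

theorem proj_of_mem {a : Ω} {p : GBCond Ω} (ha : a ∈ p.F) :
    proj a p = List.ofFn (fun k : Fin p.n => p.v a k) :=
  if_pos ha

@[simp]
theorem proj_empty (a : Ω) : proj a GBCond.empty = [] := by
  simp [proj, GBCond.empty]

theorem proj_mono {R : Fin 2 → Ω → Ω → Prop} {a : Ω} {p q : GBCond Ω} (hqp : GBle R q p) :
    proj a p <+: proj a q := by
  by_cases ha : a ∈ p.F
  · rw [proj_of_mem ha, proj_of_mem (hqp.1 ha), List.prefix_iff_getElem]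
    refine ⟨by simpa using hqp.2.1, fun i hi => ?_⟩
    simpa using (hqp.2.2.1 a ha i (by simpa using hi)).symm
  · simp [proj, ha]

theorem length_proj_extend (p : GBCond Ω) (a : Ω) (m : ℕ) (η : ℕ → Ω → Fin 2) :
    (proj a (p.extend a m η)).length = max p.n (max m 1) := by
  simp [proj, GBCond.extend]

theorem prefix_proj_extend {a : Ω} {p : GBCond Ω} {s : List (Fin 2)} {η : ℕ → Ω → Fin 2}
    (hps : proj a p <+: s) (hη : ∀ k (hk : k < s.length), η k a = s[k]) :
    s <+: proj a (p.extend a s.length η) := by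
  rw [proj_of_mem (p := p.extend a s.length η) (Finset.mem_insert_self a p.F),
    List.prefix_iff_getElem]
  refine ⟨by simp [GBCond.extend], fun i hi => ?_⟩
  simp only [List.getElem_ofFn, GBCond.extend]
  split_ifs with hold
  · have hlen : (proj a p).length = p.n := by simp [proj, hold.1]
    simpa [proj, hold.1] using (hps.getElem (i := i) (by omega)).symm
  · exact (hη i hi).symm

theorem exists_le_prefix_proj {R : Fin 2 → Ω → Ω → Prop} {a : Ω}
    (hcol : ∀ e : Fin 2, ∃ η : Ω → Fin 2, RespectsOn R univ η ∧ η a = e)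
    {p : GBCond Ω} {s : List (Fin 2)} (hps : proj a p <+: s) :
    ∃ q : GBCond Ω, GBle R q p ∧ s <+: proj a q := by
  choose η hη hηa using fun k : ℕ => hcol (s.getD k 0)
  refine ⟨p.extend a s.length η, p.extend_le a _ fun k => (hη k).mono (subset_univ _),
    prefix_proj_extend hps fun k hk => ?_⟩
  rw [hηa, List.getD_eq_getElem]

theorem proj_surjective (a : Ω) : Function.Surjective (proj a) := by
  intro s
  rcases eq_or_ne s [] with rfl | hs
  · exact ⟨GBCond.empty, proj_empty a⟩
  · have hempty : proj a GBCond.empty <+: s := by simp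
    let q := GBCond.empty.extend a s.length fun k _ => s.getD k 0
    have hlen : s.length = (proj a q).length := by
      have hpos := List.length_pos_iff.mpr hs
      rw [length_proj_extend]
      simp only [GBCond.empty]
      omega
    refine ⟨q, ((prefix_proj_extend hempty fun k hk => ?_).eq_of_length hlen).symm⟩
    exact List.getD_eq_getElem s 0 hk

end

theorem proj_is_forcing_projection_general [DecidableEq Ω]
    (R : Fin 2 → Ω → Ω → Prop)
    (hsuit : ∀ (b : Ω) (e : Fin 2), ∃ η : Ω → Fin 2, RespectsOn R Set.univ η ∧ η b = e)
    (a : Ω) :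
    (∀ p q : GBCond Ω, GBle R q p → proj a p <+: proj a q) ∧
    (∀ (p : GBCond Ω) (s : List (Fin 2)), proj a p <+: s →
      ∃ q : GBCond Ω, GBle R q p ∧ s <+: proj a q) ∧
    Function.Surjective (proj a) :=
  ⟨fun _ _ => proj_mono, fun _ _ => exists_le_prefix_proj (hsuit a), proj_surjective a⟩

/-- For a suitable 2-graph `B` (in particular: every vertex can be given either color by
some total respecting coloring) and any vertex `a`, the map `pr_a : G_B → 2^{<ω}` into
Cohen forcing (ordered by end-extension) is a forcing projection: it is monotone,
surjective, and any end-extension `s` of `pr_a(p)` is realized by some extension of `p`. -/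
theorem proj_is_forcing_projection [DecidableEq Ω]
    (R : Fin 2 → Ω → Ω → Prop)
    (hirr : ∀ e, Irreflexive (R e)) (hsym : ∀ e, Symmetric (R e))
    (hdisj : ∀ a b, ¬(R 0 a b ∧ R 1 a b))
    (hsuit : ∀ (b : Ω) (e : Fin 2), ∃ η : Ω → Fin 2, RespectsOn R Set.univ η ∧ η b = e)
    (a : Ω) :
    (∀ p q : GBCond Ω, GBle R q p → proj a p <+: proj a q) ∧
    (∀ (p : GBCond Ω) (s : List (Fin 2)), proj a p <+: s →
      ∃ q : GBCond Ω, GBle R q p ∧ s <+: proj a q) ∧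
    Function.Surjective (proj a) :=
  proj_is_forcing_projection_general R hsuit a
end

section
/- Incompatibility from labeled edges: Suppose e ∈ {0,1}, p₁, p₂ ∈ G_B with c₁ ∈ F_{p₁}, c₂ ∈ F_{p₂}, c₁ Rₑ c₂, ℚ is a poset with G_B a complete subforcing, ḃ is a ℚ-name for an infinite subset of ω, and for each i, qᵢ ≤ pᵢ in ℚ forces η̇_{cᵢ} ↾ ḃ ≡ e. Then q₁ and q₂ are incompatible in ℚ. -/
open Set

universe u v

variable {Ω : Type u}

theorem GBle_refl (R : Fin 2 → Ω → Ω → Prop) (p : GBCond Ω) : GBle R p p :=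
  ⟨Finset.Subset.refl _, le_refl _, fun _ _ _ _ => rfl,
    fun k hk hk' => absurd (lt_of_le_of_lt hk hk') (lt_irrefl _)⟩

theorem GBle_trans {R : Fin 2 → Ω → Ω → Prop} {t r p : GBCond Ω}
    (h1 : GBle R t r) (h2 : GBle R r p) : GBle R t p := by
  obtain ⟨hF1, hn1, hv1, hresp1⟩ := h1
  obtain ⟨hF2, hn2, hv2, hresp2⟩ := h2
  refine ⟨hF2.trans hF1, hn2.trans hn1, ?_, ?_⟩
  · intro a ha k hk
    rw [hv1 a (hF2 ha) k (lt_of_lt_of_le hk hn2), hv2 a ha k hk]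
  · intro k hk hk' e' a ha b hb hR
    by_cases hkr : k < r.n
    · rw [hv1 a (hF2 ha) k hkr, hv1 b (hF2 hb) k hkr]
      exact hresp2 k hk hkr e' a ha b hb hR
    · exact hresp1 k (le_of_not_gt hkr) hk' e' a (hF2 ha) b (hF2 hb) hR

theorem GBle_ext {R : Fin 2 → Ω → Ω → Prop}
    (hsuit : ∀ (b : Ω) (e : Fin 2), ∃ η : Ω → Fin 2, RespectsOn R Set.univ η ∧ η b = e)
    (u : GBCond Ω) (hF : u.F.Nonempty) (n : ℕ) :
    ∃ r : GBCond Ω, GBle R r u ∧ n < r.n := by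
  by_cases hn : n < u.n
  · exact ⟨u, GBle_refl R u, hn⟩
  · obtain ⟨η, hη, -⟩ := hsuit hF.choose 0
    refine ⟨⟨u.F, n + 1, fun a k => if k < u.n then u.v a k else η a, ?_⟩,
      ⟨Finset.Subset.refl _, ?_, ?_, ?_⟩, Nat.lt_succ_self n⟩
    · simp [Finset.nonempty_iff_ne_empty.mp hF]
    · show u.n ≤ n + 1; omega
    · intro a _ k hk
      show (if k < u.n then u.v a k else η a) = u.v a k
      rw [if_pos hk]
    · intro k hk _ e' a ha b hb hR
      show ¬((if k < u.n then u.v a k else η a) = e' ∧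
        (if k < u.n then u.v b k else η b) = e')
      have hku : ¬ k < u.n := by omega
      rw [if_neg hku, if_neg hku]
      exact hη e' a (Set.mem_univ a) b (Set.mem_univ b) hR

/-- Incompatibility from labeled edges.  Suppose `e ∈ {0,1}`, `p₁, p₂ ∈ G_B` (for a
suitable 2-graph) with `cᵢ ∈ F_{pᵢ}` and `c₁ Rₑ c₂`; `Q` is a poset into which `G_B`
embeds completely (via `ι`, preserving order and incompatibility, and such that every
`q ∈ Q` has a reduction to `G_B`); `ḃ` is a `Q`-name for an infinite subset of `ω`
(encoded by the monotone relation `Bname q n` = "`q ⊩ n ∈ ḃ`", forced infinite); and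
`qᵢ ≤ ι pᵢ` forces `η̇_{cᵢ} ↾ ḃ ≡ e` (i.e. no `r ≤ qᵢ` forcing `n ∈ ḃ` is compatible
with a `G_B`-condition giving `η_{cᵢ}(n) ≠ e`).  Then `q₁ ⊥ q₂` in `Q`. -/
theorem incompatible_of_labeled_edge
    (R : Fin 2 → Ω → Ω → Prop)
    (hirr : ∀ e, Irreflexive (R e)) (hsym : ∀ e, Symmetric (R e))
    (hdisj : ∀ a b, ¬(R 0 a b ∧ R 1 a b))
    (hsuit : ∀ (b : Ω) (e : Fin 2), ∃ η : Ω → Fin 2, RespectsOn R Set.univ η ∧ η b = e)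
    (Q : Type v) [Preorder Q] (ι : GBCond Ω → Q)
    (hmono : ∀ p p' : GBCond Ω, GBle R p' p → ι p' ≤ ι p)
    (hincomp : ∀ p p' : GBCond Ω, (¬∃ r, GBle R r p ∧ GBle R r p') →
      ¬∃ s, s ≤ ι p ∧ s ≤ ι p')
    (hred : ∀ q : Q, ∃ p : GBCond Ω, ∀ p' : GBCond Ω, GBle R p' p →
      ∃ s, s ≤ ι p' ∧ s ≤ q)
    (Bname : Q → ℕ → Prop)
    (hBmono : ∀ (q q' : Q) (n : ℕ), q' ≤ q → Bname q n → Bname q' n)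
    (hBinf : ∀ (q : Q) (m : ℕ), ∃ q', q' ≤ q ∧ ∃ n, m ≤ n ∧ Bname q' n)
    (e : Fin 2) (p₁ p₂ : GBCond Ω) (c₁ c₂ : Ω)
    (hc₁ : c₁ ∈ p₁.F) (hc₂ : c₂ ∈ p₂.F) (hedge : R e c₁ c₂)
    (q₁ q₂ : Q) (hq₁ : q₁ ≤ ι p₁) (hq₂ : q₂ ≤ ι p₂)
    (hf₁ : ∀ r, r ≤ q₁ → ∀ n, Bname r n → ∀ p : GBCond Ω,
      (∃ s, s ≤ r ∧ s ≤ ι p) → c₁ ∈ p.F → n < p.n → p.v c₁ n = e)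
    (hf₂ : ∀ r, r ≤ q₂ → ∀ n, Bname r n → ∀ p : GBCond Ω,
      (∃ s, s ≤ r ∧ s ≤ ι p) → c₂ ∈ p.F → n < p.n → p.v c₂ n = e) :
    ¬∃ q : Q, q ≤ q₁ ∧ q ≤ q₂ := by
  rintro ⟨q, hqq₁, hqq₂⟩
  -- reduce q to p
  obtain ⟨p, hp⟩ := hred q
  -- any GB-extension of p is GB-compatible with p₁ and with p₂
  have compat : ∀ r : GBCond Ω, GBle R r p → ∀ (p' : GBCond Ω), q ≤ ι p' →
      ∃ t, GBle R t r ∧ GBle R t p' := by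
    intro r hr p' hq'
    obtain ⟨s, hs1, hs2⟩ := hp r hr
    by_contra h
    exact hincomp r p' h ⟨s, hs1, hs2.trans hq'⟩
  -- find t below p, p₁, p₂
  obtain ⟨t₁, ht₁p, ht₁p₁⟩ := compat p (GBle_refl R p) p₁ (hqq₁.trans hq₁)
  obtain ⟨t, htt₁, htp₂⟩ := compat t₁ ht₁p p₂ (hqq₂.trans hq₂)
  have htp : GBle R t p := GBle_trans htt₁ ht₁p
  have htp₁ : GBle R t p₁ := GBle_trans htt₁ ht₁p₁
  have hc₁t : c₁ ∈ t.F := htp₁.1 hc₁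
  have hc₂t : c₂ ∈ t.F := htp₂.1 hc₂
  -- s below ι t and q
  obtain ⟨s, hs1, hs2⟩ := hp t htp
  -- get q' ≤ s forcing some n ≥ t.n into ḃ
  obtain ⟨q', hq's, n, hn, hBn⟩ := hBinf s t.n
  -- reduce q'
  obtain ⟨p', hp'⟩ := hred q'
  -- p' is compatible with t in GB
  obtain ⟨s₀, hs₀1, hs₀2⟩ := hp' p' (GBle_refl R p')
  have : ∃ u, GBle R u p' ∧ GBle R u t := by
    by_contra h
    exact hincomp p' t h ⟨s₀, hs₀1, (hs₀2.trans hq's).trans hs1⟩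
  obtain ⟨u, hup', hut⟩ := this
  -- extend u above level n
  obtain ⟨r, hru, hrn⟩ := GBle_ext hsuit u ⟨c₁, hut.1 hc₁t⟩ n
  have hrt : GBle R r t := GBle_trans hru hut
  -- r is compatible with q'
  obtain ⟨s', hs'1, hs'2⟩ := hp' r (GBle_trans hru hup')
  have hBs' : Bname s' n := hBmono q' s' n hs'2 hBn
  have hs'q₁ : s' ≤ q₁ := hs'2.trans ((hq's.trans hs2).trans hqq₁)
  have hs'q₂ : s' ≤ q₂ := hs'2.trans ((hq's.trans hs2).trans hqq₂)
  have hv₁ : r.v c₁ n = e :=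
    hf₁ s' hs'q₁ n hBs' r ⟨s', le_refl s', hs'1⟩ (hrt.1 hc₁t) hrn
  have hv₂ : r.v c₂ n = e :=
    hf₂ s' hs'q₂ n hBs' r ⟨s', le_refl s', hs'1⟩ (hrt.1 hc₂t) hrn
  exact hrt.2.2.2 n hn hrn e c₁ hc₁t c₂ hc₂t hedge ⟨hv₁, hv₂⟩
end
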